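/- Let (A, μ, Δ, α, β, ψ, ω) be a λ-infBH-bialgebra. Then M = A⊗A with left action γ = μ⊗β (i.e. a▷(x⊗y) = ax⊗β(y)), right action ν = α⊗μ (i.e. (x⊗y)◁a = α(x)⊗ya), left coaction ρ = Δ⊗ψ (i.e. ρ(x⊗y)=x₁⊗(x₂⊗ψ(y))), and right coaction φ = ω⊗Δ (i.e. φ(x⊗y)=(ω(x)⊗y₁)⊗y₂), with structure maps α⊗α, β⊗β, ψ⊗ψ, ω⊗ω, is a λ-infBH-Hopf bimodule over A. -/
import Mathlib


open TensorProduct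

open TensorProduct in
/-- `lam`-infinitesimal BiHom-bialgebra `(A, μ, Δ, α, β, ψ, ω)`. -/
def IsInfBHBialgebra (K A : Type*) [Field K] [AddCommGroup A] [Module K A] (lam : K)
    (μ : A →ₗ[K] A →ₗ[K] A) (Δ : A →ₗ[K] A ⊗[K] A)
    (α β ψ ω : A →ₗ[K] A) : Prop :=
  -- BiHom-associative algebra
  (∀ a, α (β a) = β (α a)) ∧
  (∀ a b, α (μ a b) = μ (α a) (α b)) ∧
  (∀ a b, β (μ a b) = μ (β a) (β b)) ∧
  (∀ a b c, μ (α a) (μ b c) = μ (μ a b) (β c)) ∧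
  -- BiHom-coassociative coalgebra
  (∀ a, ψ (ω a) = ω (ψ a)) ∧
  (TensorProduct.map ψ ψ ∘ₗ Δ = Δ ∘ₗ ψ) ∧
  (TensorProduct.map ω ω ∘ₗ Δ = Δ ∘ₗ ω) ∧
  (TensorProduct.map Δ ψ ∘ₗ Δ =
    (TensorProduct.assoc K A A A).symm.toLinearMap ∘ₗ TensorProduct.map ω Δ ∘ₗ Δ) ∧
  -- the structure maps pairwise commute
  (∀ a, α (ψ a) = ψ (α a)) ∧ (∀ a, α (ω a) = ω (α a)) ∧
  (∀ a, β (ψ a) = ψ (β a)) ∧ (∀ a, β (ω a) = ω (β a)) ∧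
  -- `α, β` are coalgebra morphisms
  (TensorProduct.map α α ∘ₗ Δ = Δ ∘ₗ α) ∧
  (TensorProduct.map β β ∘ₗ Δ = Δ ∘ₗ β) ∧
  -- `ψ, ω` are algebra morphisms
  (∀ a b, ψ (μ a b) = μ (ψ a) (ψ b)) ∧
  (∀ a b, ω (μ a b) = μ (ω a) (ω b)) ∧
  -- the `lam`-infinitesimal compatibility condition
  (∀ a b, Δ (μ a b) =
    TensorProduct.map (μ (ω a)) β (Δ b) +
    TensorProduct.map α (μ.flip (ψ b)) (Δ a) +
    lam • (α (ω a) ⊗ₜ[K] β (ψ b)))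

open TensorProduct in
/-- `lam`-infBH-Hopf bimodule `(M, l, r, ρ, φ, αM, βM, ψM, ωM)` over the
`lam`-infBH-bialgebra `(A, μ, Δ, αA, βA, ψA, ωA)` (Definition of the paper):
BiHom-bimodule, BiHom-bicomodule, the two `lam`-infBH-Hopf module compatibilities
and the two Long-module conditions. -/
def IsHopfBimod (K A M : Type*) [Field K] [AddCommGroup A] [Module K A]
    [AddCommGroup M] [Module K M] (lam : K)
    (μ : A →ₗ[K] A →ₗ[K] A) (Δ : A →ₗ[K] A ⊗[K] A)
    (αA βA ψA ωA : A →ₗ[K] A)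
    (l : A →ₗ[K] M →ₗ[K] M) (r : M →ₗ[K] A →ₗ[K] M)
    (ρ : M →ₗ[K] A ⊗[K] M) (φ : M →ₗ[K] M ⊗[K] A)
    (αM βM ψM ωM : M →ₗ[K] M) : Prop :=
  -- any two of the structure maps of `M` commute
  (∀ m, αM (βM m) = βM (αM m)) ∧ (∀ m, αM (ψM m) = ψM (αM m)) ∧
  (∀ m, αM (ωM m) = ωM (αM m)) ∧ (∀ m, βM (ψM m) = ψM (βM m)) ∧
  (∀ m, βM (ωM m) = ωM (βM m)) ∧ (∀ m, ψM (ωM m) = ωM (ψM m)) ∧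
  -- BiHom-bimodule conditions
  (∀ a m, αM (l a m) = l (αA a) (αM m)) ∧
  (∀ a m, βM (l a m) = l (βA a) (βM m)) ∧
  (∀ a b m, l (αA a) (l b m) = l (μ a b) (βM m)) ∧
  (∀ m a, αM (r m a) = r (αM m) (αA a)) ∧
  (∀ m a, βM (r m a) = r (βM m) (βA a)) ∧
  (∀ m a b, r (r m a) (βA b) = r (αM m) (μ a b)) ∧
  (∀ a m b, l (αA a) (r m b) = r (l a m) (βA b)) ∧
  -- BiHom-bicomodule conditions
  (TensorProduct.map ψA ψM ∘ₗ ρ = ρ ∘ₗ ψM) ∧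
  (TensorProduct.map ωA ωM ∘ₗ ρ = ρ ∘ₗ ωM) ∧
  (TensorProduct.map ψM ψA ∘ₗ φ = φ ∘ₗ ψM) ∧
  (TensorProduct.map ωM ωA ∘ₗ φ = φ ∘ₗ ωM) ∧
  (TensorProduct.map ωA ρ ∘ₗ ρ =
    (TensorProduct.assoc K A A M).toLinearMap ∘ₗ TensorProduct.map Δ ψM ∘ₗ ρ) ∧
  (TensorProduct.map ωM Δ ∘ₗ φ =
    (TensorProduct.assoc K M A A).toLinearMap ∘ₗ TensorProduct.map φ ψA ∘ₗ φ) ∧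
  (TensorProduct.map ωA φ ∘ₗ ρ =
    (TensorProduct.assoc K A M A).toLinearMap ∘ₗ TensorProduct.map ρ ψA ∘ₗ φ) ∧
  -- left `lam`-infBH-Hopf module compatibility
  (∀ a m, ρ (l a m) =
    TensorProduct.map (μ (ωA a)) βM (ρ m) +
    TensorProduct.map αA (l.flip (ψM m)) (Δ a) +
    lam • (αA (ωA a) ⊗ₜ[K] βM (ψM m))) ∧
  -- right `lam`-infBH-Hopf module compatibility
  (∀ m a, φ (r m a) =
    TensorProduct.map (r (ωM m)) βA (Δ a) +
    TensorProduct.map αM (μ.flip (ψA a)) (φ m) +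
    lam • (αM (ωM m) ⊗ₜ[K] βA (ψA a))) ∧
  -- Long module conditions
  (∀ a m, φ (l a m) = TensorProduct.map (l (ωA a)) βA (φ m)) ∧
  (∀ m a, ρ (r m a) = TensorProduct.map αA (r.flip (ψA a)) (ρ m))

set_option maxHeartbeats 1600000

/-- for a `lam`-infBH-bialgebra `A`, the space `M = A ⊗ A` with
`a ▷ (x⊗y) = ax ⊗ β(y)`, `(x⊗y) ◁ a = α(x) ⊗ ya`, `ρ = Δ ⊗ ψ`, `φ = ω ⊗ Δ` and
structure maps `α⊗α, β⊗β, ψ⊗ψ, ω⊗ω` is a `lam`-infBH-Hopf bimodule over `A`. -/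
theorem stmt16 (K A : Type*) [Field K] [AddCommGroup A] [Module K A] (lam : K)
    (μ : A →ₗ[K] A →ₗ[K] A) (Δ : A →ₗ[K] A ⊗[K] A) (αA βA ψA ωA : A →ₗ[K] A)
    (hbi : IsInfBHBialgebra K A lam μ Δ αA βA ψA ωA)
    (l : A →ₗ[K] (A ⊗[K] A) →ₗ[K] A ⊗[K] A)
    (hl : ∀ (a x y : A), l a (x ⊗ₜ[K] y) = μ a x ⊗ₜ[K] βA y)
    (r : (A ⊗[K] A) →ₗ[K] A →ₗ[K] A ⊗[K] A)
    (hr : ∀ (x y a : A), r (x ⊗ₜ[K] y) a = αA x ⊗ₜ[K] μ y a)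
    (ρ : (A ⊗[K] A) →ₗ[K] A ⊗[K] (A ⊗[K] A))
    (hρ : ρ = (TensorProduct.assoc K A A A).toLinearMap ∘ₗ TensorProduct.map Δ ψA)
    (φ : (A ⊗[K] A) →ₗ[K] (A ⊗[K] A) ⊗[K] A)
    (hφ : φ = (TensorProduct.assoc K A A A).symm.toLinearMap ∘ₗ TensorProduct.map ωA Δ) :
    IsHopfBimod K A (A ⊗[K] A) lam μ Δ αA βA ψA ωA l r ρ φ
      (TensorProduct.map αA αA) (TensorProduct.map βA βA)
      (TensorProduct.map ψA ψA) (TensorProduct.map ωA ωA) := by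
  obtain ⟨hαβ, hαμ, hβμ, hass, hψω, hψΔ, hωΔ, hco, hαψ, hαω, hβψ, hβω, hαΔ, hβΔ, hψμ, hωμ, hcp⟩ := hbi
  have hψΔ' : ∀ t, TensorProduct.map ψA ψA (Δ t) = Δ (ψA t) := fun t => by
    simpa using LinearMap.congr_fun hψΔ t
  have hωΔ' : ∀ t, TensorProduct.map ωA ωA (Δ t) = Δ (ωA t) := fun t => by
    simpa using LinearMap.congr_fun hωΔ t
  have hαΔ' : ∀ t, TensorProduct.map αA αA (Δ t) = Δ (αA t) := fun t => by
    simpa using LinearMap.congr_fun hαΔ t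
  have hβΔ' : ∀ t, TensorProduct.map βA βA (Δ t) = Δ (βA t) := fun t => by
    simpa using LinearMap.congr_fun hβΔ t
  have hco' : ∀ t, TensorProduct.map Δ ψA (Δ t) =
      (TensorProduct.assoc K A A A).symm (TensorProduct.map ωA Δ (Δ t)) := fun t => by
    simpa using LinearMap.congr_fun hco t
  have hco2 : ∀ t, TensorProduct.map ωA Δ (Δ t) =
      (TensorProduct.assoc K A A A) (TensorProduct.map Δ ψA (Δ t)) := fun t => by
    rw [hco']; simp
  have hρ' : ∀ s t, ρ (s ⊗ₜ[K] t) = (TensorProduct.assoc K A A A) (Δ s ⊗ₜ[K] ψA t) := by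
    intro s t; rw [hρ]; rfl
  have hφ' : ∀ s t, φ (s ⊗ₜ[K] t) = (TensorProduct.assoc K A A A).symm (ωA s ⊗ₜ[K] Δ t) := by
    intro s t; rw [hφ]; rfl
  have comm2 : ∀ (f g : A →ₗ[K] A), (∀ x, f (g x) = g (f x)) →
      ∀ m : A ⊗[K] A, TensorProduct.map f f (TensorProduct.map g g m) =
        TensorProduct.map g g (TensorProduct.map f f m) := by
    intro f g h m
    induction m using TensorProduct.induction_on with
    | zero => simp
    | tmul x y => simp [h]
    | add u v hu hv => simp [hu, hv]
  refine ⟨comm2 αA βA hαβ, comm2 αA ψA hαψ, comm2 αA ωA hαω, comm2 βA ψA hβψ,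
    comm2 βA ωA hβω, comm2 ψA ωA hψω, ?_, ?_, ?_, ?_, ?_, ?_, ?_, ?_, ?_, ?_, ?_, ?_, ?_, ?_,
    ?_, ?_, ?_, ?_⟩
  -- G7
  · intro a m
    induction m using TensorProduct.induction_on with
    | zero => simp
    | tmul x y => simp [hl, hαμ, hαβ]
    | add u v hu hv => simp [hu, hv]
  -- G8
  · intro a m
    induction m using TensorProduct.induction_on with
    | zero => simp
    | tmul x y => simp [hl, hβμ]
    | add u v hu hv => simp [hu, hv]
  -- G9
  · intro a b m
    induction m using TensorProduct.induction_on with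
    | zero => simp
    | tmul x y => simp [hl, hass]
    | add u v hu hv => simp [hu, hv]
  -- G10
  · intro m a
    induction m using TensorProduct.induction_on with
    | zero => simp
    | tmul x y => simp [hr, hαμ]
    | add u v hu hv => simp [hu, hv]
  -- G11
  · intro m a
    induction m using TensorProduct.induction_on with
    | zero => simp
    | tmul x y => simp [hr, hβμ, hαβ]
    | add u v hu hv => simp [hu, hv]
  -- G12
  · intro m a b
    induction m using TensorProduct.induction_on with
    | zero => simp
    | tmul x y => simp [hr, hass]
    | add u v hu hv => simp [hu, hv]
  -- G13
  · intro a m b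
    induction m using TensorProduct.induction_on with
    | zero => simp
    | tmul x y => simp [hl, hr, hαμ, hβμ]
    | add u v hu hv => simp [hu, hv]
  -- G14
  · apply TensorProduct.ext'
    intro x y
    simp only [LinearMap.comp_apply, TensorProduct.map_tmul]
    rw [hρ', hρ', TensorProduct.map_map_assoc]
    simp [hψΔ']
  -- G15
  · apply TensorProduct.ext'
    intro x y
    simp only [LinearMap.comp_apply, TensorProduct.map_tmul]
    rw [hρ', hρ', TensorProduct.map_map_assoc]
    simp [hωΔ', hψω]
  -- G16
  · apply TensorProduct.ext'
    intro x y
    simp only [LinearMap.comp_apply, TensorProduct.map_tmul]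
    rw [hφ', hφ', TensorProduct.map_map_assoc_symm]
    simp [hψΔ', hψω]
  -- G17
  · apply TensorProduct.ext'
    intro x y
    simp only [LinearMap.comp_apply, TensorProduct.map_tmul]
    rw [hφ', hφ', TensorProduct.map_map_assoc_symm]
    simp [hωΔ']
  -- G18
  · apply TensorProduct.ext'
    intro x y
    have eρ : TensorProduct.map ωA ρ =
        TensorProduct.map LinearMap.id (TensorProduct.assoc K A A A).toLinearMap ∘ₗ
          TensorProduct.map ωA (TensorProduct.map Δ ψA) := by
      rw [hρ, ← TensorProduct.map_comp, LinearMap.id_comp]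
    have hpent : ∀ (w : (A ⊗[K] A) ⊗[K] A) (c : A),
        TensorProduct.map LinearMap.id (TensorProduct.assoc K A A A).toLinearMap
          ((TensorProduct.assoc K A (A ⊗[K] A) A) ((TensorProduct.assoc K A A A) w ⊗ₜ[K] c)) =
        (TensorProduct.assoc K A A (A ⊗[K] A))
          ((TensorProduct.assoc K (A ⊗[K] A) A A) (w ⊗ₜ[K] c)) := by
      intro w c
      induction w using TensorProduct.induction_on with
      | zero => simp
      | add s t hs ht => simp [TensorProduct.add_tmul, hs, ht]
      | tmul u s =>
        induction u using TensorProduct.induction_on with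
        | zero => simp
        | add s' t' h1 h2 => simp [TensorProduct.add_tmul, h1, h2]
        | tmul p q => simp
    simp only [LinearMap.comp_apply, LinearEquiv.coe_coe]
    rw [hρ', eρ]
    simp only [LinearMap.comp_apply]
    rw [TensorProduct.map_map_assoc, TensorProduct.map_map_assoc]
    simp only [TensorProduct.map_tmul]
    rw [hco2, hpent]
  -- G19
  · apply TensorProduct.ext'
    intro x y
    have eφ : TensorProduct.map φ ψA =
        TensorProduct.map (TensorProduct.assoc K A A A).symm.toLinearMap LinearMap.id ∘ₗ
          TensorProduct.map (TensorProduct.map ωA Δ) ψA := by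
      rw [hφ, ← TensorProduct.map_comp, LinearMap.id_comp]
    have hC : ∀ (d : A) (w : (A ⊗[K] A) ⊗[K] A),
        (TensorProduct.assoc K A A (A ⊗[K] A)).symm (d ⊗ₜ[K] (TensorProduct.assoc K A A A) w) =
        (TensorProduct.assoc K (A ⊗[K] A) A A)
          (TensorProduct.map (TensorProduct.assoc K A A A).symm.toLinearMap LinearMap.id
            ((TensorProduct.assoc K A (A ⊗[K] A) A).symm (d ⊗ₜ[K] w))) := by
      intro d w
      induction w using TensorProduct.induction_on with
      | zero => simp
      | add s t hs ht => simp [TensorProduct.tmul_add, hs, ht]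
      | tmul u s =>
        induction u using TensorProduct.induction_on with
        | zero => simp
        | add s' t' h1 h2 => simp [TensorProduct.add_tmul, TensorProduct.tmul_add, h1, h2]
        | tmul p q => simp
    simp only [LinearMap.comp_apply, LinearEquiv.coe_coe]
    rw [hφ', eφ]
    simp only [LinearMap.comp_apply]
    rw [TensorProduct.map_map_assoc_symm, TensorProduct.map_map_assoc_symm]
    simp only [TensorProduct.map_tmul]
    rw [hco2, hC]
  -- G20
  · apply TensorProduct.ext'
    intro x y
    have eφ : TensorProduct.map ωA φ =
        TensorProduct.map LinearMap.id (TensorProduct.assoc K A A A).symm.toLinearMap ∘ₗ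
          TensorProduct.map ωA (TensorProduct.map ωA Δ) := by
      rw [hφ, ← TensorProduct.map_comp, LinearMap.id_comp]
    have eρ : TensorProduct.map ρ ψA =
        TensorProduct.map (TensorProduct.assoc K A A A).toLinearMap LinearMap.id ∘ₗ
          TensorProduct.map (TensorProduct.map Δ ψA) ψA := by
      rw [hρ, ← TensorProduct.map_comp, LinearMap.id_comp]
    have hC : ∀ (U V : A ⊗[K] A),
        TensorProduct.map LinearMap.id (TensorProduct.assoc K A A A).symm.toLinearMap
          ((TensorProduct.assoc K A A (A ⊗[K] A)) (U ⊗ₜ[K] V)) =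
        (TensorProduct.assoc K A (A ⊗[K] A) A)
          (TensorProduct.map (TensorProduct.assoc K A A A).toLinearMap LinearMap.id
            ((TensorProduct.assoc K (A ⊗[K] A) A A).symm (U ⊗ₜ[K] V))) := by
      intro U V
      induction U using TensorProduct.induction_on with
      | zero => simp
      | add s t hs ht => simp only [TensorProduct.add_tmul, map_add, hs, ht]
      | tmul p q =>
        induction V using TensorProduct.induction_on with
        | zero => simp
        | add s' t' h1 h2 => simp only [TensorProduct.tmul_add, map_add, h1, h2]
        | tmul s t => simp
    simp only [LinearMap.comp_apply, LinearEquiv.coe_coe]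
    rw [hρ', hφ', eφ, eρ]
    simp only [LinearMap.comp_apply]
    rw [TensorProduct.map_map_assoc, TensorProduct.map_map_assoc_symm]
    simp only [TensorProduct.map_tmul]
    rw [hωΔ', hψΔ', hC]
  -- G21
  · intro a m
    induction m using TensorProduct.induction_on with
    | zero => simp
    | add u v hu hv =>
      simp only [map_add, TensorProduct.tmul_add, smul_add, TensorProduct.map_add_right,
        LinearMap.add_apply, hu, hv]
      abel
    | tmul x y =>
      have h2 : ∀ u : A ⊗[K] A, TensorProduct.map αA (l.flip (ψA x ⊗ₜ[K] ψA y)) u =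
          (TensorProduct.assoc K A A A)
            ((TensorProduct.map αA (μ.flip (ψA x)) u) ⊗ₜ[K] βA (ψA y)) := by
        intro u
        induction u using TensorProduct.induction_on with
        | zero => simp
        | tmul p q => simp [hl, LinearMap.flip_apply]
        | add s t hs ht => simp [TensorProduct.add_tmul, hs, ht]
      rw [hl, hρ', hρ', hcp]
      simp only [TensorProduct.map_tmul]
      rw [h2 (Δ a), TensorProduct.add_tmul, TensorProduct.add_tmul, TensorProduct.smul_tmul']
      simp [TensorProduct.map_map_assoc, hβψ, TensorProduct.smul_tmul']
  -- G22
  · intro m a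
    induction m using TensorProduct.induction_on with
    | zero => simp
    | add u v hu hv =>
      simp only [map_add, TensorProduct.add_tmul, smul_add, TensorProduct.map_add_left,
        LinearMap.add_apply, hu, hv]
      abel
    | tmul x y =>
      have h1 : ∀ u : A ⊗[K] A, TensorProduct.map (r (ωA x ⊗ₜ[K] ωA y)) βA u =
          (TensorProduct.assoc K A A A).symm
            (αA (ωA x) ⊗ₜ[K] TensorProduct.map (μ (ωA y)) βA u) := by
        intro u
        induction u using TensorProduct.induction_on with
        | zero => simp
        | tmul p q => simp [hr]
        | add s t hs ht => simp [TensorProduct.tmul_add, hs, ht]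
      rw [hr, hφ', hφ', hcp]
      simp only [TensorProduct.map_tmul]
      rw [h1 (Δ a), TensorProduct.tmul_add, TensorProduct.tmul_add, TensorProduct.tmul_smul]
      simp [TensorProduct.map_map_assoc_symm, hαω]
  -- G23
  · intro a m
    induction m using TensorProduct.induction_on with
    | zero => simp
    | add u v hu hv => simp [hu, hv]
    | tmul x y =>
      have h3 : ∀ u : A ⊗[K] A,
          TensorProduct.map (l (ωA a)) βA ((TensorProduct.assoc K A A A).symm (ωA x ⊗ₜ[K] u)) =
          (TensorProduct.assoc K A A A).symm
            ((μ (ωA a)) (ωA x) ⊗ₜ[K] TensorProduct.map βA βA u) := by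
        intro u
        induction u using TensorProduct.induction_on with
        | zero => simp
        | tmul p q => simp [hl]
        | add s t hs ht => simp [TensorProduct.tmul_add, hs, ht]
      rw [hl, hφ', hφ', h3 (Δ y)]
      rw [hωμ, ← hβΔ']
  -- G24
  · intro m a
    induction m using TensorProduct.induction_on with
    | zero => simp
    | add u v hu hv => simp [hu, hv]
    | tmul x y =>
      have h4 : ∀ u : A ⊗[K] A,
          TensorProduct.map αA (r.flip (ψA a)) ((TensorProduct.assoc K A A A) (u ⊗ₜ[K] ψA y)) =
          (TensorProduct.assoc K A A A)
            (TensorProduct.map αA αA u ⊗ₜ[K] (μ (ψA y)) (ψA a)) := by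
        intro u
        induction u using TensorProduct.induction_on with
        | zero => simp
        | tmul p q => simp [hr, LinearMap.flip_apply]
        | add s t hs ht => simp [TensorProduct.add_tmul, hs, ht]
      rw [hr, hρ', hρ', h4 (Δ x)]
      rw [hψμ, ← hαΔ']
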